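/- arXiv:2501.02719 — 3 statements merged into one kernel-verified Lean document; each statement's English description precedes it below -/
import Mathlib

section
/- Let n ≥ 1 and let u₁, …, u_n, v₁, …, v_n ∈ ℂ^{n+1}. Write U = (u₁, …, u_n) and V = (v₁, …, v_n) for the (n+1)×n matrices with these columns. Then the (n+1)×n matrix whose l-th column (for l = 1, …, n) is 𝒢_l[u₁, …, u_n, 𝒢[v₁, …, v_n]] equals V · ad(Uᵀ V), where Uᵀ V is an n×n matrix and ad denotes the adjugate. -/
open Matrix

/-- The generalized cross product `𝒢[w₁, …, w_n] ∈ ℂ^{n+1}` of `n` vectors in `ℂ^{n+1}`: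
its `j`-th component is `det(w₁, …, w_n, e_j)`. -/
noncomputable def gcross {n : ℕ} (w : Fin n → (Fin (n + 1) → ℂ)) : Fin (n + 1) → ℂ :=
  fun j => ((Matrix.of (Fin.snoc w (Pi.single j (1 : ℂ))))ᵀ).det

/-- For `n+1` vectors `u₁, …, u_{n+1} ∈ ℂ^{n+1}` and `l ∈ {1, …, n+1}`,
`𝒢_l[u₁, …, u_{n+1}] = −Σ_j det([[u, e_j], [e_lᵀ, 0]]) e_j ∈ ℂ^{n+1}`, where the determinant
is of the `(n+2)×(n+2)` block matrix with the matrix `u = (u₁, …, u_{n+1})` and the column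
`e_j` on top and the row `e_lᵀ` with a `0` entry on the bottom. -/
noncomputable def Gl {n : ℕ} (u : Fin (n + 1) → (Fin (n + 1) → ℂ)) (l : Fin (n + 1)) :
    Fin (n + 1) → ℂ :=
  fun j =>
    - (Matrix.fromBlocks ((Matrix.of u)ᵀ)
        (Matrix.of fun r (_ : Fin 1) => (Pi.single j (1 : ℂ) : Fin (n + 1) → ℂ) r)
        (Matrix.of fun (_ : Fin 1) (c : Fin (n + 1)) => (Pi.single l (1 : ℂ) : Fin (n + 1) → ℂ) c) 0).det

namespace GlAux

/-- determinant is additive over a finite sum in one row -/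
lemma det_updateRow_finsum {m : ℕ} {ι : Type*} (M : Matrix (Fin m) (Fin m) ℂ) (i : Fin m)
    (s : Finset ι) (f : ι → Fin m → ℂ) :
    (M.updateRow i (∑ k ∈ s, f k)).det = ∑ k ∈ s, (M.updateRow i (f k)).det := by
  classical
  induction s using Finset.induction_on with
  | empty =>
      simp only [Finset.sum_empty]
      exact Matrix.det_eq_zero_of_row_eq_zero i (by simp)
  | insert _ _ hk ih =>
      rw [Finset.sum_insert hk, Matrix.det_updateRow_add, ih, Finset.sum_insert hk]

lemma det_updateRow_pi {m : ℕ} (M : Matrix (Fin m) (Fin m) ℂ) (i : Fin m) (w : Fin m → ℂ) :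
    (M.updateRow i w).det = ∑ k, w k * (M.updateRow i (Pi.single k 1)).det := by
  have hw : w = ∑ k, w k • (Pi.single k 1 : Fin m → ℂ) := by
    funext j
    simp [Pi.single_apply, Finset.sum_ite_eq', mul_comm]
  calc (M.updateRow i w).det
      = (M.updateRow i (∑ k, w k • (Pi.single k 1 : Fin m → ℂ))).det := by rw [← hw]
    _ = ∑ k, (M.updateRow i (w k • (Pi.single k 1 : Fin m → ℂ))).det :=
        det_updateRow_finsum M i Finset.univ _
    _ = ∑ k, w k * (M.updateRow i (Pi.single k 1)).det := by
        simp [Matrix.det_updateRow_smul]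

lemma gcross_eq {n : ℕ} (a : Fin n → (Fin (n + 1) → ℂ)) (r : Fin (n + 1)) :
    gcross a r = (Matrix.of (Fin.snoc a (Pi.single r 1))).det := by
  rw [gcross, Matrix.det_transpose]

/-- multilinearity in the last row of a snoc matrix -/
lemma det_snoc {n : ℕ} (a : Fin n → (Fin (n + 1) → ℂ)) (x : Fin (n + 1) → ℂ) :
    (Matrix.of (Fin.snoc a x)).det = ∑ r, x r * gcross a r := by
  have h1 : Matrix.of (Fin.snoc a x)
      = (Matrix.of (Fin.snoc a x)).updateRow (Fin.last n) x := by
    ext i j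
    rw [Matrix.updateRow_apply]
    split
    · next h => subst h; simp [Fin.snoc_last]
    · rfl
  rw [h1, det_updateRow_pi]
  refine Finset.sum_congr rfl fun r _ => ?_
  congr 1
  rw [gcross_eq]
  congr 1
  ext i j
  rw [Matrix.updateRow_apply]
  split
  · next h => subst h; simp [Fin.snoc_last]
  · next h =>
      obtain ⟨i, rfl⟩ := Fin.exists_castSucc_eq.2 h
      simp [Fin.snoc_castSucc]

/-- `Gl` is an adjugate entry of the column matrix. -/
lemma Gl_eq {n : ℕ} (u : Fin (n + 1) → (Fin (n + 1) → ℂ)) (l j : Fin (n + 1)) :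
    Gl u l j = (((Matrix.of u)ᵀ).updateRow j (Pi.single l 1)).det := by
  classical
  set M : Matrix (Fin (n + 1)) (Fin (n + 1)) ℂ := (Matrix.of u)ᵀ with hM
  set B : Matrix (Fin (n + 1)) (Fin 1) ℂ :=
    Matrix.of fun r (_ : Fin 1) => (Pi.single j (1 : ℂ) : Fin (n + 1) → ℂ) r with hB
  set C : Matrix (Fin 1) (Fin (n + 1)) ℂ :=
    Matrix.of fun (_ : Fin 1) c => (Pi.single l (1 : ℂ) : Fin (n + 1) → ℂ) c with hC
  set N := Matrix.fromBlocks M B C 0 with hN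
  have hGl : Gl u l j = -N.det := rfl
  set σ : Equiv.Perm (Fin (n + 1) ⊕ Fin 1) := Equiv.swap (Sum.inl j) (Sum.inr 0) with hσ
  have key : N.submatrix (⇑σ) id
      = Matrix.fromBlocks (M.updateRow j (Pi.single l 1)) 0
          (Matrix.of fun (_ : Fin 1) c => M j c) (Matrix.of fun (_ : Fin 1) (_ : Fin 1) => (1 : ℂ)) := by
    ext i k
    cases i with
    | inl i =>
        by_cases hij : i = j
        · subst hij
          have : σ (Sum.inl i) = Sum.inr 0 := Equiv.swap_apply_left _ _
          cases k with
          | inl k => simp [this, hN, hB, hC, Matrix.fromBlocks, Matrix.updateRow_self]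
          | inr k => simp [this, hN, hB, hC, Matrix.fromBlocks]
        · have : σ (Sum.inl i) = Sum.inl i :=
            Equiv.swap_apply_of_ne_of_ne (by simpa using hij) (by simp)
          cases k with
          | inl k => simp [this, hN, hB, hC, Matrix.fromBlocks,
              Matrix.updateRow_ne hij]
          | inr k => simp [this, hN, hB, hC, Matrix.fromBlocks, Pi.single_apply, hij]
    | inr i =>
        have hi : i = 0 := Subsingleton.elim _ _
        subst hi
        have : σ (Sum.inr 0) = Sum.inl j := Equiv.swap_apply_right _ _
        cases k with
        | inl k => simp [this, hN, hB, hC, Matrix.fromBlocks]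
        | inr k =>
            have hk : k = 0 := Subsingleton.elim _ _
            subst hk
            simp [this, hN, hB, hC, Matrix.fromBlocks]
  have hperm := Matrix.det_permute σ N
  rw [key] at hperm
  rw [Matrix.det_fromBlocks_zero₁₂] at hperm
  have hone : (Matrix.of fun (_ : Fin 1) (_ : Fin 1) => (1 : ℂ)).det = 1 := by
    rw [Matrix.det_fin_one]; rfl
  have hsign : Equiv.Perm.sign σ = -1 :=
    Equiv.Perm.sign_swap (by simp)
  rw [hone, mul_one, hsign] at hperm
  rw [hGl]
  rw [hperm]
  push_cast
  ring

/-- the bordered product identity -/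
lemma key_mul {n : ℕ} (a v : Fin n → (Fin (n + 1) → ℂ)) (y : Fin (n + 1) → ℂ) :
    (Matrix.of (Fin.snoc a (gcross v))).det * (Matrix.of (Fin.snoc v y)).det
      = (Matrix.of a * (Matrix.of v)ᵀ).det * (Matrix.of (Fin.snoc v y)).det := by
  set P := Matrix.of (Fin.snoc a (gcross v)) * (Matrix.of (Fin.snoc v y))ᵀ with hP
  have hdetP : P.det
      = (Matrix.of (Fin.snoc a (gcross v))).det * (Matrix.of (Fin.snoc v y)).det := by
    rw [hP, Matrix.det_mul, Matrix.det_transpose]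
  have hlast : ∀ k : Fin n, P (Fin.last n) (Fin.castSucc k) = 0 := by
    intro k
    have : P (Fin.last n) (Fin.castSucc k) = ∑ s, v k s * gcross v s := by
      simp only [hP, Matrix.mul_apply, Matrix.transpose_apply, Matrix.of_apply,
        Fin.snoc_last, Fin.snoc_castSucc]
      exact Finset.sum_congr rfl fun s _ => mul_comm _ _
    rw [this, ← det_snoc v (v k)]
    exact Matrix.det_zero_of_row_eq (Fin.castSucc_lt_last k).ne
      (by funext s; simp [Fin.snoc_castSucc, Fin.snoc_last])
  have hll : P (Fin.last n) (Fin.last n) = (Matrix.of (Fin.snoc v y)).det := by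
    have : P (Fin.last n) (Fin.last n) = ∑ s, y s * gcross v s := by
      simp only [hP, Matrix.mul_apply, Matrix.transpose_apply, Matrix.of_apply,
        Fin.snoc_last]
      exact Finset.sum_congr rfl fun s _ => mul_comm _ _
    rw [this, ← det_snoc v y]
  have hsub : P.submatrix (Fin.last n).succAbove (Fin.last n).succAbove
      = Matrix.of a * (Matrix.of v)ᵀ := by
    ext i k
    simp [hP, Fin.succAbove_last, Matrix.mul_apply, Fin.snoc_castSucc]
  have hexp := Matrix.det_succ_row P (Fin.last n)
  rw [Fin.sum_univ_castSucc] at hexp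
  have hzero : ∀ k : Fin n,
      (-1 : ℂ) ^ ((Fin.last n : ℕ) + ((Fin.castSucc k : Fin (n+1)) : ℕ)) * P (Fin.last n) (Fin.castSucc k)
        * ((P.submatrix (Fin.last n).succAbove (Fin.castSucc k).succAbove).det) = 0 := by
    intro k
    rw [hlast k]
    ring
  rw [Finset.sum_eq_zero (fun k _ => hzero k), zero_add] at hexp
  have hsign : (-1 : ℂ) ^ ((Fin.last n : ℕ) + ((Fin.last n : Fin (n+1)) : ℕ)) = 1 := by
    simp only [Fin.val_last]
    exact Even.neg_one_pow ⟨n, rfl⟩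
  rw [hsign, one_mul, hll, hsub] at hexp
  rw [← hdetP, hexp]
  ring

lemma exists_det_ne {n : ℕ} (v : Fin n → (Fin (n + 1) → ℂ))
    (hv : LinearIndependent ℂ v) :
    ∃ y, (Matrix.of (Fin.snoc v y)).det ≠ 0 := by
  classical
  have hcard : (Set.range v).toFinset.card < Module.finrank ℂ (Fin (n + 1) → ℂ) := by
    rw [Module.finrank_fin_fun]
    calc (Set.range v).toFinset.card ≤ Fintype.card (Fin n) := by
          rw [Set.toFinset_range]
          exact (Finset.card_image_le).trans (by simp)
      _ < n + 1 := by simp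
  have hlt : Submodule.span ℂ (Set.range v) < ⊤ := span_lt_top_of_card_lt_finrank hcard
  obtain ⟨y, -, hy⟩ := SetLike.exists_of_lt hlt
  refine ⟨y, ?_⟩
  have hind : LinearIndependent ℂ (Fin.snoc v y : Fin (n + 1) → (Fin (n + 1) → ℂ)) :=
    linearIndependent_fin_snoc.2 ⟨hv, hy⟩
  have hunit : IsUnit (Matrix.of (Fin.snoc v y) : Matrix (Fin (n+1)) (Fin (n+1)) ℂ) :=
    Matrix.linearIndependent_rows_iff_isUnit.1 hind
  have := (Matrix.isUnit_iff_isUnit_det _).1 hunit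
  exact this.ne_zero

/-- Cauchy–Binet style identity -/
lemma det_mul_transpose {n : ℕ} (a v : Fin n → (Fin (n + 1) → ℂ)) :
    (Matrix.of a * (Matrix.of v)ᵀ).det = (Matrix.of (Fin.snoc a (gcross v))).det := by
  classical
  by_cases h : ∃ y, (Matrix.of (Fin.snoc v y)).det ≠ 0
  · obtain ⟨y, hy⟩ := h
    exact (mul_right_cancel₀ hy (key_mul a v y)).symm
  · push_neg at h
    have hG : gcross v = 0 := by
      funext r
      rw [gcross_eq]
      exact h _
    rw [hG]
    have h1 : (Matrix.of (Fin.snoc a (0 : Fin (n + 1) → ℂ))).det = 0 :=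
      Matrix.det_eq_zero_of_row_eq_zero (Fin.last n) (by simp [Fin.snoc_last])
    rw [h1]
    by_contra hA
    have hv : LinearIndependent ℂ v := by
      rw [Fintype.linearIndependent_iff]
      intro c hc
      have hc' : ∀ s, ∑ k, c k * v k s = 0 := by
        intro s
        have := congrFun hc s
        simpa using this
      have hmv : (Matrix.of a * (Matrix.of v)ᵀ) *ᵥ c = 0 := by
        funext i
        simp only [Matrix.mulVec, dotProduct, Matrix.mul_apply,
          Matrix.transpose_apply, Matrix.of_apply, Pi.zero_apply]
        have hterm : ∀ k, (∑ s, a i s * v k s) * c k = ∑ s, a i s * (c k * v k s) := by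
          intro k
          rw [Finset.sum_mul]
          exact Finset.sum_congr rfl fun s _ => by ring
        calc ∑ k, (∑ s, a i s * v k s) * c k
            = ∑ k, ∑ s, a i s * (c k * v k s) := Finset.sum_congr rfl fun k _ => hterm k
          _ = ∑ s, ∑ k, a i s * (c k * v k s) := Finset.sum_comm
          _ = ∑ s, a i s * (∑ k, c k * v k s) := by
              exact Finset.sum_congr rfl fun s _ => by rw [Finset.mul_sum]
          _ = 0 := by simp [hc']
      have := Matrix.eq_zero_of_mulVec_eq_zero hA hmv
      intro i
      rw [this]; rfl
    obtain ⟨y, hy⟩ := exists_det_ne v hv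
    exact hy (h y)

end GlAux

/-- For `u₁, …, u_n, v₁, …, v_n ∈ ℂ^{n+1}` with `U = (u₁, …, u_n)` and `V = (v₁, …, v_n)`
the `(n+1)×n` matrices with these columns, the `(n+1)×n` matrix whose `l`-th column
(for `l = 1, …, n`) is `𝒢_l[u₁, …, u_n, 𝒢[v₁, …, v_n]]` equals `V · ad(Uᵀ V)`.
Here `(Matrix.of u)ᵀ = U` and `(Matrix.of v)ᵀ = V`, so `Uᵀ V = Matrix.of u * (Matrix.of v)ᵀ`. -/
theorem Gl_snoc_gcross_eq_mul_adjugate (n : ℕ) (hn : 1 ≤ n)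
    (u v : Fin n → (Fin (n + 1) → ℂ)) :
    ∀ (l : Fin n) (r : Fin (n + 1)),
      Gl (Fin.snoc u (gcross v)) l.castSucc r
        = ((Matrix.of v)ᵀ * (Matrix.of u * (Matrix.of v)ᵀ).adjugate) r l := by
  intro l r
  classical
  set G := gcross v with hGdef
  set u' : Fin (n + 1) → (Fin (n + 1) → ℂ) := Fin.snoc u G with hu'
  set A : Matrix (Fin n) (Fin n) ℂ := Matrix.of u * (Matrix.of v)ᵀ with hA
  -- LHS to updateRow form
  rw [GlAux.Gl_eq]
  have step1 : (((Matrix.of u')ᵀ).updateRow r (Pi.single l.castSucc 1)).det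
      = ((Matrix.of u').updateRow l.castSucc (Pi.single r 1)).det := by
    rw [← Matrix.adjugate_apply, ← Matrix.adjugate_apply, ← Matrix.adjugate_transpose,
      Matrix.transpose_apply]
  rw [step1]
  -- identify the updated row matrix as a snoc matrix
  set a : Fin n → (Fin (n + 1) → ℂ) := Function.update u l (Pi.single r 1) with ha
  have step2 : (Matrix.of u').updateRow l.castSucc (Pi.single r 1)
      = Matrix.of (Fin.snoc a G) := by
    ext i k
    rw [Matrix.updateRow_apply]
    have : (Fin.snoc a G : Fin (n+1) → (Fin (n+1) → ℂ))
        = Function.update u' l.castSucc (Pi.single r 1) := by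
      rw [hu', ha]
      exact Fin.snoc_update (α := fun _ : Fin (n+1) => Fin (n+1) → ℂ) G u l (Pi.single r 1)
    rw [this]
    by_cases hi : i = l.castSucc
    · subst hi; simp
    · simp [Function.update_apply, hi]
  rw [step2, ← GlAux.det_mul_transpose]
  -- identify of a * (of v)ᵀ as A.updateRow l w
  have step3 : Matrix.of a * (Matrix.of v)ᵀ = A.updateRow l (fun k => v k r) := by
    ext i k
    rw [Matrix.updateRow_apply]
    by_cases hi : i = l
    · subst hi
      simp only [if_pos rfl, Matrix.mul_apply, Matrix.transpose_apply, Matrix.of_apply,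
        ha, Function.update_self]
      simp [Pi.single_apply]
    · simp only [if_neg hi, hA, Matrix.mul_apply, Matrix.transpose_apply, Matrix.of_apply,
        ha, Function.update_of_ne hi]
  rw [step3]
  -- RHS
  have step4 : ((Matrix.of v)ᵀ * A.adjugate) r l = ∑ k, v k r * A.adjugate k l := by
    simp [Matrix.mul_apply]
  rw [step4, GlAux.det_updateRow_pi]
  exact Finset.sum_congr rfl fun k _ => by rw [Matrix.adjugate_apply]
end

section
/- Let n ≥ 1 and let q : ℝ × ℝ → ℝⁿ be a smooth function of (x,t). Define the (n+1)×(n+1) matrices σ = diag(1, −I_{n×n}), Q(x,t) = [[0, −q(x,t)ᵀ], [q(x,t), 0_{n×n}]], and, for λ ∈ ℂ, Q̃(x,t;λ) = 4λ²Q + 2iλσ(Q_x − Q²) + 2Q³ − Q_{xx} + [Q_x, Q], where subscripts denote partial derivatives and [A,B] = AB − BA. Then q satisfies the vector modified Korteweg–de Vries equation q_t + q_{xxx} + 3(q_x qᵀ q + q qᵀ q_x) = 0 at every point (x,t) if and only if the zero-curvature equation Q_t − Q̃_x + [−iλσ + Q, −4iλ³σ + Q̃] = 0 holds at every point (x,t)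 for every λ ∈ ℂ. -/
open Matrix

/-- The `(n+1)×(n+1)` matrix `σ = diag(1, −I_{n×n})`. -/
noncomputable def sigmaMat (n : ℕ) : Matrix (Fin (n + 1)) (Fin (n + 1)) ℂ :=
  Matrix.diagonal (Fin.cons (1 : ℂ) fun _ => -1)

/-- The `(n+1)×(n+1)` matrix `Q(x,t) = [[0, −q(x,t)ᵀ], [q(x,t), 0_{n×n}]]` built from the
real vector `q(x,t) ∈ ℝⁿ`, regarded as a complex matrix. -/
noncomputable def Qmat {n : ℕ} (q : ℝ × ℝ → Fin n → ℝ) (p : ℝ × ℝ) :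
    Matrix (Fin (n + 1)) (Fin (n + 1)) ℂ :=
  Matrix.of (Fin.cons (Fin.cons (0 : ℂ) fun k => -((q p k : ℝ) : ℂ))
    fun i => Fin.cons ((q p i : ℝ) : ℂ) fun _ => 0)

/-- Entrywise partial derivative in the first variable `x` of a matrix-valued function. -/
noncomputable def matDx {n : ℕ} (M : ℝ × ℝ → Matrix (Fin (n + 1)) (Fin (n + 1)) ℂ)
    (p : ℝ × ℝ) : Matrix (Fin (n + 1)) (Fin (n + 1)) ℂ :=
  Matrix.of fun i j => deriv (fun s => M (s, p.2) i j) p.1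

/-- Entrywise partial derivative in the second variable `t` of a matrix-valued function. -/
noncomputable def matDt {n : ℕ} (M : ℝ × ℝ → Matrix (Fin (n + 1)) (Fin (n + 1)) ℂ)
    (p : ℝ × ℝ) : Matrix (Fin (n + 1)) (Fin (n + 1)) ℂ :=
  Matrix.of fun i j => deriv (fun s => M (p.1, s) i j) p.2

/-- Componentwise partial derivative in `x` of a vector-valued function. -/
noncomputable def vecDx {n : ℕ} (q : ℝ × ℝ → Fin n → ℝ) (p : ℝ × ℝ) : Fin n → ℝ :=
  fun i => deriv (fun s => q (s, p.2) i) p.1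

/-- Componentwise partial derivative in `t` of a vector-valued function. -/
noncomputable def vecDt {n : ℕ} (q : ℝ × ℝ → Fin n → ℝ) (p : ℝ × ℝ) : Fin n → ℝ :=
  fun i => deriv (fun s => q (p.1, s) i) p.2

/-- `Q̃ = 4λ²Q + 2iλσ(Q_x − Q²) + 2Q³ − Q_{xx} + [Q_x, Q]`. -/
noncomputable def Qtilde {n : ℕ} (q : ℝ × ℝ → Fin n → ℝ) (lam : ℂ) (p : ℝ × ℝ) :
    Matrix (Fin (n + 1)) (Fin (n + 1)) ℂ :=
  (4 * lam ^ 2) • Qmat q p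
    + (2 * Complex.I * lam) • (sigmaMat n * (matDx (Qmat q) p - Qmat q p ^ 2))
    + (2 : ℂ) • Qmat q p ^ 3 - matDx (matDx (Qmat q)) p
    + (matDx (Qmat q) p * Qmat q p - Qmat q p * matDx (Qmat q) p)

/-! ### Auxiliary material -/

/-- The matrix `Qof v = [[0, −vᵀ],[v, 0]]`. -/
noncomputable def Qof {n : ℕ} (v : Fin n → ℝ) : Matrix (Fin (n + 1)) (Fin (n + 1)) ℂ :=
  Matrix.of (Fin.cons (Fin.cons (0 : ℂ) fun k => -((v k : ℝ) : ℂ))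
    fun i => Fin.cons ((v i : ℝ) : ℂ) fun _ => 0)

lemma sigma_mul_sigma (n : ℕ) : sigmaMat n * sigmaMat n = 1 := by
  ext i j
  simp only [sigmaMat, diagonal_mul_diagonal, diagonal_apply, one_apply]
  rcases eq_or_ne i j with rfl | h
  · simp only [if_pos rfl]
    refine Fin.cases ?_ (fun k => ?_) i <;> simp
  · simp [h]

lemma sigma_anticomm {n : ℕ} (v : Fin n → ℝ) :
    sigmaMat n * Qof v = -(Qof v * sigmaMat n) := by
  ext i j
  rw [sigmaMat, diagonal_mul, neg_apply, mul_diagonal]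
  refine Fin.cases ?_ (fun i' => ?_) i <;> refine Fin.cases ?_ (fun j' => ?_) j <;>
    simp [Qof]

lemma Qof_add {n : ℕ} (u v : Fin n → ℝ) : Qof (u + v) = Qof u + Qof v := by
  ext i j
  refine Fin.cases ?_ (fun i' => ?_) i <;> refine Fin.cases ?_ (fun j' => ?_) j <;>
    simp [Qof]; ring

lemma Qof_smul {n : ℕ} (r : ℝ) (v : Fin n → ℝ) : Qof (r • v) = (r : ℂ) • Qof v := by
  ext i j
  refine Fin.cases ?_ (fun i' => ?_) i <;> refine Fin.cases ?_ (fun j' => ?_) j <;>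
    simp [Qof]

lemma Qof_zero {n : ℕ} : Qof (0 : Fin n → ℝ) = 0 := by
  ext i j
  refine Fin.cases ?_ (fun i' => ?_) i <;> refine Fin.cases ?_ (fun j' => ?_) j <;>
    simp [Qof]

lemma Qof_eq_zero {n : ℕ} {v : Fin n → ℝ} (h : Qof v = 0) : v = 0 := by
  funext i
  have := congrFun (congrFun h i.succ) 0
  simpa [Qof] using this

lemma cubic_ident {n : ℕ} (u v : Fin n → ℝ) :
    Qof v * (Qof u * Qof u) + Qof u * (Qof u * Qof v)
      = -Qof ((∑ j, u j * u j) • v + (∑ j, u j * v j) • u) := by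
  ext i j
  refine Fin.cases ?_ (fun i' => ?_) i <;> refine Fin.cases ?_ (fun j' => ?_) j <;>
    simp [Qof, Matrix.mul_apply, Fin.sum_univ_succ, Finset.mul_sum, Finset.sum_mul,
      ← Complex.ofReal_sum, mul_comm, mul_left_comm] <;>
    push_cast <;> ring_nf <;>
    simp [pow_two, mul_comm, mul_left_comm] <;> ring

/-- The key algebraic identity behind the zero-curvature formulation. -/
lemma keyalg {A : Type*} [Ring A] [Algebra ℂ A] (lam : ℂ) (s a b c d e T : A)
    (hss : s * s = 1) (hsa : s * a = -(a * s)) (hsb : s * b = -(b * s))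
    (hsc : s * c = -(c * s))
    (hT : T = (4 * lam ^ 2) • a + (2 * Complex.I * lam) • (s * (b - a * a))
        + (2 : ℂ) • (a * (a * a)) - c + (b * a - a * b)) :
    e - ((4 * lam ^ 2) • b
          + (2 * Complex.I * lam) • (s * (c - (b * a + a * b)))
          + (2 : ℂ) • (b * (a * a) + a * (b * a + a * b))
          - d
          + ((c * a + b * b) - (b * b + a * c)))
      + (((-(Complex.I * lam)) • s + a) * ((-(4 * Complex.I * lam ^ 3)) • s + T)
          - ((-(4 * Complex.I * lam ^ 3)) • s + T) * ((-(Complex.I * lam)) • s + a))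
      = e + d - (3 : ℂ) • (b * (a * a) + a * (a * b)) := by
  obtain ⟨μ, hμ⟩ : ∃ μ : ℂ, μ = Complex.I * lam := ⟨_, rfl⟩
  have e1 : (4 * lam ^ 2 : ℂ) = -(4 * μ ^ 2) := by
    rw [hμ]; linear_combination (4 * lam ^ 2) * Complex.I_sq
  have e2 : (2 * Complex.I * lam : ℂ) = 2 * μ := by rw [hμ]; ring
  have e3 : (-(Complex.I * lam) : ℂ) = -μ := by rw [hμ]
  have e4 : (-(4 * Complex.I * lam ^ 3) : ℂ) = 4 * μ ^ 3 := by
    rw [hμ]; linear_combination (-4 * Complex.I * lam ^ 3) * Complex.I_sq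
  rw [e1, e2] at hT
  rw [e1, e2, e3, e4]
  subst hT
  have h0 : ∀ x : A, s * (s * x) = x := fun x => by rw [← mul_assoc, hss, one_mul]
  have h1 : ∀ x : A, s * (a * x) = -(a * (s * x)) := fun x => by
    rw [← mul_assoc, hsa, neg_mul, mul_assoc]
  have h2 : ∀ x : A, s * (b * x) = -(b * (s * x)) := fun x => by
    rw [← mul_assoc, hsb, neg_mul, mul_assoc]
  have h3 : ∀ x : A, s * (c * x) = -(c * (s * x)) := fun x => by
    rw [← mul_assoc, hsc, neg_mul, mul_assoc]
  simp only [mul_add, add_mul, mul_sub, sub_mul, smul_mul_assoc, mul_smul_comm, smul_smul,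
    mul_assoc, neg_mul, mul_neg, smul_neg, neg_neg, neg_smul,
    hsa, hsb, hsc, hss, h0, h1, h2, h3, mul_one, one_mul]
  module

/-! ### Analysis helpers -/

lemma sliceX_diff {f : ℝ × ℝ → ℝ} (hf : Differentiable ℝ f) (y : ℝ) :
    Differentiable ℝ (fun s => f (s, y)) :=
  hf.comp (differentiable_id.prodMk (differentiable_const y))

lemma sliceT_diff {f : ℝ × ℝ → ℝ} (hf : Differentiable ℝ f) (x : ℝ) :
    Differentiable ℝ (fun s => f (x, s)) :=
  hf.comp ((differentiable_const x).prodMk differentiable_id)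

lemma sliceX_hasDerivAt {f : ℝ × ℝ → ℝ} (hf : Differentiable ℝ f) (p : ℝ × ℝ) :
    HasDerivAt (fun s => f (s, p.2)) (fderiv ℝ f p ((1 : ℝ), (0 : ℝ))) p.1 :=
  (hf p).hasFDerivAt.comp_hasDerivAt p.1 ((hasDerivAt_id p.1).prodMk (hasDerivAt_const p.1 p.2))

lemma vecDx_eq {n : ℕ} {q : ℝ × ℝ → Fin n → ℝ} (hq : ContDiff ℝ (⊤ : ℕ∞) q) :
    vecDx q = fun p i => fderiv ℝ (fun p => q p i) p ((1 : ℝ), (0 : ℝ)) := by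
  funext p i
  exact (sliceX_hasDerivAt ((contDiff_pi.1 hq i).differentiable (by simp)) p).deriv

lemma contDiff_vecDx {n : ℕ} {q : ℝ × ℝ → Fin n → ℝ} (hq : ContDiff ℝ (⊤ : ℕ∞) q) :
    ContDiff ℝ (⊤ : ℕ∞) (vecDx q) := by
  rw [vecDx_eq hq]
  refine contDiff_pi.2 fun i => ?_
  exact ((contDiff_pi.1 hq i).fderiv_right (by simp)).clm_apply contDiff_const

/-- Entrywise differentiability of a matrix-valued function. -/
def ED {n : ℕ} (M : ℝ × ℝ → Matrix (Fin (n + 1)) (Fin (n + 1)) ℂ) : Prop :=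
  ∀ i j, Differentiable ℝ (fun p => M p i j)

lemma ED.sliceX {n : ℕ} {M : ℝ × ℝ → Matrix (Fin (n + 1)) (Fin (n + 1)) ℂ} (h : ED M)
    (p : ℝ × ℝ) (i j : Fin (n + 1)) :
    DifferentiableAt ℝ (fun s => M (s, p.2) i j) p.1 :=
  ((h i j).comp (differentiable_id.prodMk (differentiable_const p.2))).differentiableAt

lemma ED_Qof {n : ℕ} {v : ℝ × ℝ → Fin n → ℝ} (hv : Differentiable ℝ v) :
    ED (fun p => Qof (v p)) := by
  intro i j
  have hco : ∀ k, Differentiable ℝ (fun p => ((v p k : ℝ) : ℂ)) := fun k =>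
    Complex.ofRealCLM.differentiable.comp ((differentiable_pi.1 hv) k)
  refine Fin.cases ?_ (fun i' => ?_) i <;> refine Fin.cases ?_ (fun j' => ?_) j <;>
    simp only [Qof, Matrix.of_apply, Fin.cons_zero, Fin.cons_succ]
  · exact differentiable_const _
  · exact (hco j').neg
  · exact hco i'
  · exact differentiable_const _

lemma ED.add {n : ℕ} {M N : ℝ × ℝ → Matrix (Fin (n + 1)) (Fin (n + 1)) ℂ}
    (hM : ED M) (hN : ED N) : ED (fun p => M p + N p) := fun i j => (hM i j).add (hN i j)

lemma ED.sub {n : ℕ} {M N : ℝ × ℝ → Matrix (Fin (n + 1)) (Fin (n + 1)) ℂ}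
    (hM : ED M) (hN : ED N) : ED (fun p => M p - N p) := fun i j => (hM i j).sub (hN i j)

lemma ED.smul {n : ℕ} {M : ℝ × ℝ → Matrix (Fin (n + 1)) (Fin (n + 1)) ℂ} (z : ℂ)
    (hM : ED M) : ED (fun p => z • M p) := fun i j => (hM i j).const_smul z

lemma ED.mul {n : ℕ} {M N : ℝ × ℝ → Matrix (Fin (n + 1)) (Fin (n + 1)) ℂ}
    (hM : ED M) (hN : ED N) : ED (fun p => M p * N p) := by
  intro i j
  simp only [Matrix.mul_apply]
  exact Differentiable.fun_sum fun k _ => (hM i k).mul (hN k j)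

lemma ED.constMul {n : ℕ} (S : Matrix (Fin (n + 1)) (Fin (n + 1)) ℂ)
    {N : ℝ × ℝ → Matrix (Fin (n + 1)) (Fin (n + 1)) ℂ} (hN : ED N) :
    ED (fun p => S * N p) := by
  intro i j
  simp only [Matrix.mul_apply]
  exact Differentiable.fun_sum fun k _ => (hN k j).const_mul (S i k)

lemma matDx_add {n : ℕ} {M N : ℝ × ℝ → Matrix (Fin (n + 1)) (Fin (n + 1)) ℂ}
    (hM : ED M) (hN : ED N) (p : ℝ × ℝ) :
    matDx (fun p => M p + N p) p = matDx M p + matDx N p := by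
  ext i j
  exact deriv_add (hM.sliceX p i j) (hN.sliceX p i j)

lemma matDx_sub {n : ℕ} {M N : ℝ × ℝ → Matrix (Fin (n + 1)) (Fin (n + 1)) ℂ}
    (hM : ED M) (hN : ED N) (p : ℝ × ℝ) :
    matDx (fun p => M p - N p) p = matDx M p - matDx N p := by
  ext i j
  exact deriv_sub (hM.sliceX p i j) (hN.sliceX p i j)

lemma matDx_smul {n : ℕ} (z : ℂ) (M : ℝ × ℝ → Matrix (Fin (n + 1)) (Fin (n + 1)) ℂ)
    (p : ℝ × ℝ) : matDx (fun p => z • M p) p = z • matDx M p := by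
  ext i j
  exact deriv_const_mul_field z

lemma matDx_mul {n : ℕ} {M N : ℝ × ℝ → Matrix (Fin (n + 1)) (Fin (n + 1)) ℂ}
    (hM : ED M) (hN : ED N) (p : ℝ × ℝ) :
    matDx (fun p => M p * N p) p = matDx M p * N p + M p * matDx N p := by
  ext i j
  have H : HasDerivAt (fun s => ∑ k, M (s, p.2) i k * N (s, p.2) k j)
      (∑ k, (deriv (fun s => M (s, p.2) i k) p.1 * N p k j
        + M p i k * deriv (fun s => N (s, p.2) k j) p.1)) p.1 :=
    HasDerivAt.fun_sum fun k _ =>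
      ((hM.sliceX p i k).hasDerivAt.mul (hN.sliceX p k j).hasDerivAt)
  simp only [matDx, Matrix.of_apply, Matrix.add_apply, Matrix.mul_apply]
  rw [H.deriv, Finset.sum_add_distrib]

lemma matDx_constMul {n : ℕ} (S : Matrix (Fin (n + 1)) (Fin (n + 1)) ℂ)
    {N : ℝ × ℝ → Matrix (Fin (n + 1)) (Fin (n + 1)) ℂ} (hN : ED N) (p : ℝ × ℝ) :
    matDx (fun p => S * N p) p = S * matDx N p := by
  ext i j
  have H : HasDerivAt (fun s => ∑ k, S i k * N (s, p.2) k j)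
      (∑ k, S i k * deriv (fun s => N (s, p.2) k j) p.1) p.1 :=
    HasDerivAt.fun_sum fun k _ => ((hN.sliceX p k j).hasDerivAt.const_mul (S i k))
  simp only [matDx, Matrix.of_apply, Matrix.mul_apply]
  rw [H.deriv]

lemma matDx_Qof {n : ℕ} {v : ℝ × ℝ → Fin n → ℝ} (hv : Differentiable ℝ v) (p : ℝ × ℝ) :
    matDx (fun p => Qof (v p)) p = Qof (vecDx v p) := by
  have hco : ∀ k, DifferentiableAt ℝ (fun s => v (s, p.2) k) p.1 := fun k =>
    (sliceX_diff ((differentiable_pi.1 hv) k) p.2).differentiableAt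
  ext i j
  refine Fin.cases ?_ (fun i' => ?_) i <;> refine Fin.cases ?_ (fun j' => ?_) j <;>
    simp only [matDx, vecDx, Qof, Matrix.of_apply, Fin.cons_zero, Fin.cons_succ]
  · exact deriv_const _ _
  · exact ((hco j').hasDerivAt.ofReal_comp.neg).deriv
  · exact ((hco i').hasDerivAt.ofReal_comp).deriv
  · exact deriv_const _ _

lemma matDt_Qof {n : ℕ} {v : ℝ × ℝ → Fin n → ℝ} (hv : Differentiable ℝ v) (p : ℝ × ℝ) :
    matDt (fun p => Qof (v p)) p = Qof (vecDt v p) := by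
  have hco : ∀ k, DifferentiableAt ℝ (fun s => v (p.1, s) k) p.2 := fun k =>
    (sliceT_diff ((differentiable_pi.1 hv) k) p.1).differentiableAt
  ext i j
  refine Fin.cases ?_ (fun i' => ?_) i <;> refine Fin.cases ?_ (fun j' => ?_) j <;>
    simp only [matDt, vecDt, Qof, Matrix.of_apply, Fin.cons_zero, Fin.cons_succ]
  · exact deriv_const _ _
  · exact ((hco j').hasDerivAt.ofReal_comp.neg).deriv
  · exact ((hco i').hasDerivAt.ofReal_comp).deriv
  · exact deriv_const _ _

/-- Master computation: the zero-curvature expression is `λ`-independent and equals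
the mKdV residual, packaged into a `Qof` matrix. -/
lemma master {n : ℕ} (q : ℝ × ℝ → Fin n → ℝ) (hq : ContDiff ℝ (⊤ : ℕ∞) q)
    (lam : ℂ) (p : ℝ × ℝ) :
    matDt (Qmat q) p - matDx (Qtilde q lam) p
      + (((-(Complex.I * lam)) • sigmaMat n + Qmat q p)
            * ((-(4 * Complex.I * lam ^ 3)) • sigmaMat n + Qtilde q lam p)
          - ((-(4 * Complex.I * lam ^ 3)) • sigmaMat n + Qtilde q lam p)
            * ((-(Complex.I * lam)) • sigmaMat n + Qmat q p))
      = Qof (vecDt q p + vecDx (vecDx (vecDx q)) p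
          + (3 : ℝ) • ((∑ j, q p j * q p j) • vecDx q p
              + (∑ j, q p j * vecDx q p j) • q p)) := by
  have hq1 : ContDiff ℝ (⊤ : ℕ∞) (vecDx q) := contDiff_vecDx hq
  have hq2 : ContDiff ℝ (⊤ : ℕ∞) (vecDx (vecDx q)) := contDiff_vecDx hq1
  have hdq : Differentiable ℝ q := hq.differentiable (by simp)
  have hdq1 : Differentiable ℝ (vecDx q) := hq1.differentiable (by simp)
  have hdq2 : Differentiable ℝ (vecDx (vecDx q)) := hq2.differentiable (by simp)
  have hA : Qmat q = fun p => Qof (q p) := rfl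
  have edA : ED (fun p => Qof (q p)) := ED_Qof hdq
  have edB : ED (fun p => Qof (vecDx q p)) := ED_Qof hdq1
  have edC : ED (fun p => Qof (vecDx (vecDx q) p)) := ED_Qof hdq2
  have hxA : matDx (fun p => Qof (q p)) = fun p => Qof (vecDx q p) :=
    funext (matDx_Qof hdq)
  have hxB : matDx (fun p => Qof (vecDx q p)) = fun p => Qof (vecDx (vecDx q) p) :=
    funext (matDx_Qof hdq1)
  have hT : Qtilde q lam = fun p =>
      (4 * lam ^ 2) • Qof (q p)
        + (2 * Complex.I * lam) •
            (sigmaMat n * (Qof (vecDx q p) - Qof (q p) * Qof (q p)))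
        + (2 : ℂ) • (Qof (q p) * (Qof (q p) * Qof (q p))) - Qof (vecDx (vecDx q) p)
        + (Qof (vecDx q p) * Qof (q p) - Qof (q p) * Qof (vecDx q p)) := by
    funext p
    simp only [Qtilde, hA, hxA, hxB, pow_succ, pow_zero, one_mul, mul_assoc]
  have hDx : matDx (Qtilde q lam) p =
      (4 * lam ^ 2) • Qof (vecDx q p)
        + (2 * Complex.I * lam) •
            (sigmaMat n * (Qof (vecDx (vecDx q) p)
              - (Qof (vecDx q p) * Qof (q p) + Qof (q p) * Qof (vecDx q p))))
        + (2 : ℂ) • (Qof (vecDx q p) * (Qof (q p) * Qof (q p))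
            + Qof (q p) * (Qof (vecDx q p) * Qof (q p) + Qof (q p) * Qof (vecDx q p)))
        - Qof (vecDx (vecDx (vecDx q)) p)
        + ((Qof (vecDx (vecDx q) p) * Qof (q p) + Qof (vecDx q p) * Qof (vecDx q p))
            - (Qof (vecDx q p) * Qof (vecDx q p) + Qof (q p) * Qof (vecDx (vecDx q) p))) := by
    rw [hT]
    rw [matDx_add
        (((edA.smul _).add ((edB.sub (edA.mul edA)).constMul (sigmaMat n)|>.smul _)).add
            ((edA.mul (edA.mul edA)).smul _)|>.sub edC)
        ((edB.mul edA).sub (edA.mul edB)) p]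
    rw [matDx_sub
        (((edA.smul _).add ((edB.sub (edA.mul edA)).constMul (sigmaMat n)|>.smul _)).add
            ((edA.mul (edA.mul edA)).smul _)) edC p]
    rw [matDx_add
        ((edA.smul _).add ((edB.sub (edA.mul edA)).constMul (sigmaMat n)|>.smul _))
        ((edA.mul (edA.mul edA)).smul _) p]
    rw [matDx_add (edA.smul _)
        ((edB.sub (edA.mul edA)).constMul (sigmaMat n)|>.smul _) p]
    rw [matDx_smul, matDx_smul, matDx_smul]
    rw [matDx_constMul (sigmaMat n) (edB.sub (edA.mul edA)) p]
    rw [matDx_sub edB (edA.mul edA) p]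
    rw [matDx_mul edA edA p]
    rw [matDx_mul edA (edA.mul edA) p]
    rw [matDx_mul edA edA p]
    rw [matDx_sub (edB.mul edA) (edA.mul edB) p]
    rw [matDx_mul edB edA p, matDx_mul edA edB p]
    rw [hxA, hxB, matDx_Qof hdq2 p]
  have hDt : matDt (Qmat q) p = Qof (vecDt q p) := matDt_Qof hdq p
  rw [hDt, hDx, congrFun hT p, hA]
  rw [keyalg lam (sigmaMat n) (Qof (q p)) (Qof (vecDx q p)) (Qof (vecDx (vecDx q) p))
      (Qof (vecDx (vecDx (vecDx q)) p)) (Qof (vecDt q p)) _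
      (sigma_mul_sigma n) (sigma_anticomm _) (sigma_anticomm _) (sigma_anticomm _) rfl]
  rw [show (3 : ℂ) • (Qof (vecDx q p) * (Qof (q p) * Qof (q p))
        + Qof (q p) * (Qof (q p) * Qof (vecDx q p)))
      = (3 : ℂ) • (-Qof ((∑ j, q p j * q p j) • vecDx q p
          + (∑ j, q p j * vecDx q p j) • q p)) from by rw [cubic_ident]]
  simp only [Qof_add, Qof_smul]
  push_cast
  module

/-- A smooth `q : ℝ × ℝ → ℝⁿ` satisfies the vector mKdV equation
`q_t + q_{xxx} + 3(q_x qᵀ q + q qᵀ q_x) = 0` at every point if and only if the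
zero-curvature equation
`Q_t − Q̃_x + [−iλσ + Q, −4iλ³σ + Q̃] = 0` holds at every point for every `λ ∈ ℂ`. -/
theorem vmKdV_iff_zero_curvature (n : ℕ) (hn : 1 ≤ n)
    (q : ℝ × ℝ → Fin n → ℝ) (hq : ContDiff ℝ (⊤ : ℕ∞) q) :
    (∀ p : ℝ × ℝ,
        vecDt q p + vecDx (vecDx (vecDx q)) p
          + (3 : ℝ) • ((∑ j, q p j * q p j) • vecDx q p
              + (∑ j, q p j * vecDx q p j) • q p) = 0)
      ↔
    (∀ (lam : ℂ) (p : ℝ × ℝ),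
        matDt (Qmat q) p - matDx (Qtilde q lam) p
          + (((-(Complex.I * lam)) • sigmaMat n + Qmat q p)
                * ((-(4 * Complex.I * lam ^ 3)) • sigmaMat n + Qtilde q lam p)
              - ((-(4 * Complex.I * lam ^ 3)) • sigmaMat n + Qtilde q lam p)
                * ((-(Complex.I * lam)) • sigmaMat n + Qmat q p)) = 0) := by
  constructor
  · intro h lam p
    rw [master q hq lam p, h p, Qof_zero]
  · intro h p
    have := h 0 p
    rw [master q hq 0 p] at this
    exact Qof_eq_zero this
end

section
/- Let n ≥ 1, m ≥ 0, λ₀ ∈ ℂ, and let h : ℂ → ℂ^{n+1} (vector-valued) and W : ℂ → ℂ^{(n+1)×n} (matrix-valued) be analytic on a neighborhood of λ₀. Assume h(λ₀) ≠ 0, that the n columns of W(λ₀) are linearly independent (rank W(λ₀) = n), and that the scalar function λ ↦ det(h(λ), W(λ)) (the determinant of the (n+1)×(n+1) matrix whose first column is h(λ) and whose last n columns are those of W(λ)) has all derivatives of orders 0, 1, …, m vanishing at λ₀. Then there exist vectors B₀, B₁, …, B_m ∈ ℂⁿ with B₀ ≠ 0 such that for every k ∈ {0, …, m}: h^{(k)}(λ₀)/k!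 = Σ_{j+l=k, j,l≥0} W^{(l)}(λ₀) B_j / (j! l!), where superscripts in parentheses denote derivatives with respect to λ. -/
open Matrix
open Filter Finset

section Helpers

variable {E : Type*} [NormedAddCommGroup E] [NormedSpace ℂ E] [CompleteSpace E]

omit [CompleteSpace E] in
lemma my_analyticAt_det {ι : Type*} [Fintype ι] [DecidableEq ι]
    {A : ℂ → Matrix ι ι ℂ} {x : ℂ}
    (hA : ∀ i j, AnalyticAt ℂ (fun y => A y i j) x) :
    AnalyticAt ℂ (fun y => (A y).det) x := by
  simp only [Matrix.det_apply']
  apply Finset.analyticAt_fun_sum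
  intro σ _
  exact analyticAt_const.mul (Finset.analyticAt_fun_prod _ fun i _ => hA (σ i) i)

omit [CompleteSpace E] in
lemma my_pascal (k : ℕ) (a : ℕ → ℂ) (w : ℕ → E) :
    ∑ j ∈ range (k + 1),
        (((k.choose j : ℂ) * a j) • w (k - j + 1) + ((k.choose j : ℂ) * a (j + 1)) • w (k - j))
      = ∑ j ∈ range (k + 2), (((k + 1).choose j : ℂ) * a j) • w (k + 1 - j) := by
  rw [Finset.sum_add_distrib]
  rw [Finset.sum_range_succ' (fun j => (((k + 1).choose j : ℂ) * a j) • w (k + 1 - j)) (k + 1)]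
  have e1 : ∀ j ∈ range (k + 1),
      (((k + 1).choose (j + 1) : ℂ) * a (j + 1)) • w (k + 1 - (j + 1))
        = ((k.choose j : ℂ) * a (j + 1)) • w (k - j)
          + ((k.choose (j + 1) : ℂ) * a (j + 1)) • w (k - j) := by
    intro j hj
    have h2 : k + 1 - (j + 1) = k - j := by omega
    rw [h2, Nat.choose_succ_succ, Nat.cast_add, add_mul, add_smul]
  rw [Finset.sum_congr rfl e1, Finset.sum_add_distrib]
  have e2 : ∑ j ∈ range (k + 1), ((k.choose j : ℂ) * a j) • w (k - j + 1)
      = ∑ j ∈ range (k + 1), ((k.choose (j + 1) : ℂ) * a (j + 1)) • w (k - j)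
          + (((k + 1).choose 0 : ℂ) * a 0) • w (k + 1 - 0) := by
    rw [Finset.sum_range_succ' (fun j => ((k.choose j : ℂ) * a j) • w (k - j + 1)) k]
    rw [Finset.sum_range_succ (fun j => ((k.choose (j + 1) : ℂ) * a (j + 1)) • w (k - j)) k]
    have h3 : k.choose (k + 1) = 0 := Nat.choose_eq_zero_of_lt (by omega)
    rw [h3]
    simp only [Nat.cast_zero, zero_mul, zero_smul, add_zero, Nat.choose_zero_right,
      Nat.cast_one, one_mul, Nat.sub_zero]
    congr 1
    apply Finset.sum_congr rfl
    intro j hj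
    have : k - (j + 1) + 1 = k - j := by
      have := Finset.mem_range.mp hj; omega
    rw [this]
  rw [e2]
  abel

lemma my_iteratedDeriv_sum_smul {ι : Type*} [Fintype ι]
    {f : ι → ℂ → ℂ} {v : ι → ℂ → E} {s : Set ℂ} (hs : IsOpen s)
    (hf : ∀ i, AnalyticOnNhd ℂ (f i) s) (hv : ∀ i, AnalyticOnNhd ℂ (v i) s) :
    ∀ (k : ℕ), ∀ x ∈ s,
      iteratedDeriv k (fun y => ∑ i, f i y • v i y) x
        = ∑ i, ∑ j ∈ Finset.range (k + 1),
            ((k.choose j : ℂ) * iteratedDeriv j (f i) x) • iteratedDeriv (k - j) (v i) x := by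
  have hdf : ∀ i j, AnalyticOnNhd ℂ (iteratedDeriv j (f i)) s := fun i j => by
    rw [iteratedDeriv_eq_iterate]; exact (hf i).iterated_deriv j
  have hdv : ∀ i j, AnalyticOnNhd ℂ (iteratedDeriv j (v i)) s := fun i j => by
    rw [iteratedDeriv_eq_iterate]; exact (hv i).iterated_deriv j
  intro k
  induction k with
  | zero => intro x hx; simp
  | succ k ih =>
    intro x hx
    rw [iteratedDeriv_succ]
    have heq : iteratedDeriv k (fun y => ∑ i, f i y • v i y)
        =ᶠ[nhds x] fun y => ∑ i, ∑ j ∈ Finset.range (k + 1),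
            ((k.choose j : ℂ) * iteratedDeriv j (f i) y) • iteratedDeriv (k - j) (v i) y :=
      Filter.eventuallyEq_of_mem (hs.mem_nhds hx) fun y hy => ih y hy
    rw [heq.deriv_eq]
    have hdiff : ∀ (i : ι), ∀ j ∈ Finset.range (k + 1), DifferentiableAt ℂ
        (fun y => ((k.choose j : ℂ) * iteratedDeriv j (f i) y) • iteratedDeriv (k - j) (v i) y)
        x :=
      fun i j _ => ((differentiableAt_const _).mul
          ((hdf i j x hx).differentiableAt)).smul ((hdv i (k - j) x hx).differentiableAt)
    rw [deriv_fun_sum fun i _ => DifferentiableAt.fun_sum (hdiff i)]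
    refine Finset.sum_congr rfl fun i _ => ?_
    rw [deriv_fun_sum (hdiff i)]
    have e3 : ∀ j ∈ Finset.range (k + 1),
        deriv (fun y =>
            ((k.choose j : ℂ) * iteratedDeriv j (f i) y) • iteratedDeriv (k - j) (v i) y) x
          = ((k.choose j : ℂ) * iteratedDeriv j (f i) x) • iteratedDeriv (k - j + 1) (v i) x
            + ((k.choose j : ℂ) * iteratedDeriv (j + 1) (f i) x) • iteratedDeriv (k - j) (v i) x := by
      intro j _
      rw [deriv_fun_smul ((differentiableAt_const _).fun_mul ((hdf i j x hx).differentiableAt))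
        ((hdv i (k - j) x hx).differentiableAt)]
      rw [deriv_const_mul _ ((hdf i j x hx).differentiableAt)]
      rw [← iteratedDeriv_succ, ← iteratedDeriv_succ]
    rw [Finset.sum_congr rfl e3]
    exact my_pascal k (fun j => iteratedDeriv j (f i) x) (fun j => iteratedDeriv j (v i) x)

lemma my_iteratedDeriv_smul {f : ℂ → ℂ} {v : ℂ → E} {s : Set ℂ} (hs : IsOpen s)
    (hf : AnalyticOnNhd ℂ f s) (hv : AnalyticOnNhd ℂ v s) (k : ℕ) {x : ℂ} (hx : x ∈ s) :
    iteratedDeriv k (fun y => f y • v y) x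
      = ∑ j ∈ Finset.range (k + 1),
          ((k.choose j : ℂ) * iteratedDeriv j f x) • iteratedDeriv (k - j) v x := by
  have := my_iteratedDeriv_sum_smul (ι := Fin 1) (f := fun _ => f) (v := fun _ => v) hs
    (fun _ => hf) (fun _ => hv) k x hx
  simpa [Fin.sum_univ_one] using this

lemma my_iteratedDeriv_comp_apply {ι : Type*} [Fintype ι]
    {f : ℂ → (ι → E)} {s : Set ℂ} (hs : IsOpen s) (hf : AnalyticOnNhd ℂ f s) (k : ℕ) (i : ι) :
    ∀ x ∈ s, iteratedDeriv k f x i = iteratedDeriv k (fun y => f y i) x := by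
  induction k with
  | zero => intro x hx; simp
  | succ k ih =>
    intro x hx
    have hdf : AnalyticOnNhd ℂ (iteratedDeriv k f) s := by
      rw [iteratedDeriv_eq_iterate]; exact hf.iterated_deriv k
    have hD : HasDerivAt (iteratedDeriv k f) (deriv (iteratedDeriv k f) x) x :=
      ((hdf x hx).differentiableAt).hasDerivAt
    have hcomp : HasDerivAt (fun y => iteratedDeriv k f y i)
        (deriv (iteratedDeriv k f) x i) x :=
      (ContinuousLinearMap.proj (R := ℂ) (φ := fun _ : ι => E) i).hasFDerivAt.comp_hasDerivAt x hD
    have heq : iteratedDeriv k (fun y => f y i) =ᶠ[nhds x] fun y => iteratedDeriv k f y i :=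
      Filter.eventuallyEq_of_mem (hs.mem_nhds hx) fun y hy => (ih y hy).symm
    rw [iteratedDeriv_succ, iteratedDeriv_succ, heq.deriv_eq, hcomp.deriv]

omit [CompleteSpace E] in
lemma my_det_updateRow_sum {ι κ : Type*} [Fintype ι] [DecidableEq ι]
    (A : Matrix ι ι ℂ) (r : ι) (c : κ → ℂ) (b : κ → ι → ℂ) (t : Finset κ) :
    (A.updateRow r (∑ j ∈ t, c j • b j)).det = ∑ j ∈ t, c j * (A.updateRow r (b j)).det := by
  classical
  induction t using Finset.induction_on with
  | empty =>
    simp only [Finset.sum_empty]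
    exact Matrix.det_eq_zero_of_row_eq_zero r (fun j => by simp)
  | insert _ _ hnot ih =>
    rw [Finset.sum_insert hnot, Finset.sum_insert hnot, Matrix.det_updateRow_add,
      Matrix.det_updateRow_smul, ih]

end Helpers

/-- Algebraic core of Proposition 2 of the paper. Let `h : ℂ → ℂ^{n+1}` and
`W : ℂ → ℂ^{(n+1)×n}` (given by its `n` columns) be analytic at `λ₀`, with `h(λ₀) ≠ 0`
and the columns of `W(λ₀)` linearly independent. If all derivatives of order `0, …, m`
of `λ ↦ det(h(λ), W(λ))` vanish at `λ₀`, then there exist `B₀, …, B_m ∈ ℂⁿ` with `B₀ ≠ 0`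
such that `h^{(k)}(λ₀)/k! = Σ_{j+l=k} W^{(l)}(λ₀) B_j/(j! l!)` for every `k ∈ {0, …, m}`. -/
theorem higher_order_zero_norming_vectors (n m : ℕ) (hn : 1 ≤ n) (lam0 : ℂ)
    (h : ℂ → (Fin (n + 1) → ℂ)) (W : ℂ → (Fin n → Fin (n + 1) → ℂ))
    (hh : AnalyticAt ℂ h lam0) (hW : AnalyticAt ℂ W lam0)
    (hh0 : h lam0 ≠ 0)
    (hrank : LinearIndependent ℂ (W lam0))
    (hdet : ∀ k ≤ m,
      iteratedDeriv k
        (fun lam => ((Matrix.of (Fin.cons (h lam) (W lam)))ᵀ).det) lam0 = 0) :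
    ∃ B : ℕ → (Fin n → ℂ), B 0 ≠ 0 ∧
      ∀ k ≤ m,
        ((k.factorial : ℂ))⁻¹ • iteratedDeriv k h lam0
          = ∑ j ∈ Finset.range (k + 1),
              (((j.factorial : ℂ))⁻¹ * (((k - j).factorial : ℂ))⁻¹) •
                ∑ c, B j c • iteratedDeriv (k - j) W lam0 c := by
  classical
  -- a vector `u` outside the span of the columns of `W lam0`
  obtain ⟨u, hu⟩ : ∃ u : Fin (n + 1) → ℂ, u ∉ Submodule.span ℂ (Set.range (W lam0)) := by
    by_contra hcon
    push_neg at hcon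
    have htop : ⊤ ≤ Submodule.span ℂ (Set.range (W lam0)) := fun x _ => hcon x
    have hb := Module.finrank_eq_card_basis (Module.Basis.mk hrank htop)
    rw [Module.finrank_fin_fun, Fintype.card_fin] at hb
    omega
  have hWli : LinearIndependent ℂ (Fin.cons u (W lam0) : Fin (n + 1) → _) :=
    linearIndependent_fin_cons.mpr ⟨hrank, hu⟩
  set M : ℂ → Matrix (Fin (n + 1)) (Fin (n + 1)) ℂ :=
    fun lam => (Matrix.of (Fin.cons u (W lam)))ᵀ with hM
  set g : ℂ → ℂ := fun lam => (M lam).det with hgdef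
  have hg0 : g lam0 ≠ 0 := by
    have hunit : IsUnit (Matrix.of (Fin.cons u (W lam0))) :=
      Matrix.linearIndependent_rows_iff_isUnit.mp hWli
    have hdne : (Matrix.of (Fin.cons u (W lam0))).det ≠ 0 :=
      ((Matrix.isUnit_iff_isUnit_det _).mp hunit).ne_zero
    simpa [hgdef, hM, Matrix.det_transpose] using hdne
  -- entries of `M` are analytic wherever `W` is
  have hMent : ∀ (y : ℂ) (i j : Fin (n + 1)), AnalyticAt ℂ W y →
      AnalyticAt ℂ (fun lam => M lam i j) y := by
    intro y i j hWy
    have hrw : (fun lam => M lam i j) = fun lam => (Fin.cons u (W lam) : Fin (n + 1) → Fin (n + 1) → ℂ) j i := rfl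
    rw [hrw]
    refine Fin.cases ?_ (fun c => ?_) j
    · simp only [Fin.cons_zero]; exact analyticAt_const
    · simp only [Fin.cons_succ]
      exact ((ContinuousLinearMap.proj (R := ℂ)
        (φ := fun _ : Fin (n + 1) => ℂ) i).analyticAt _).comp
        (((ContinuousLinearMap.proj (R := ℂ)
          (φ := fun _ : Fin n => Fin (n + 1) → ℂ) c).analyticAt _).comp hWy)
  have hgan : ∀ y : ℂ, AnalyticAt ℂ W y → AnalyticAt ℂ g y := fun y hWy =>
    my_analyticAt_det (fun i j => hMent y i j hWy)
  -- Cramer solution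
  set v : ℂ → Fin (n + 1) → ℂ :=
    fun lam => (g lam)⁻¹ • Matrix.cramer (M lam) (h lam) with hvdef
  have hhent : ∀ (y : ℂ) (i : Fin (n + 1)), AnalyticAt ℂ h y →
      AnalyticAt ℂ (fun lam => h lam i) y := fun y i hy =>
    ((ContinuousLinearMap.proj (R := ℂ) (φ := fun _ : Fin (n + 1) => ℂ) i).analyticAt _).comp hy
  have hcram : ∀ (y : ℂ) (i : Fin (n + 1)), AnalyticAt ℂ h y → AnalyticAt ℂ W y →
      AnalyticAt ℂ (fun lam => ((M lam).updateCol i (h lam)).det) y := by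
    intro y i hhy hWy
    apply my_analyticAt_det
    intro a j'
    have hrw : (fun lam => (M lam).updateCol i (h lam) a j')
        = fun lam => if j' = i then h lam a else M lam a j' := by
      funext lam; rw [Matrix.updateCol_apply]
    rw [hrw]
    by_cases hji : j' = i
    · simp only [hji, if_pos rfl]; exact hhent y a hhy
    · simp only [if_neg hji]; exact hMent y a j' hWy
  have hvan : ∀ y : ℂ, AnalyticAt ℂ h y → AnalyticAt ℂ W y → g y ≠ 0 →
      AnalyticAt ℂ v y := by
    intro y hhy hWy hgy
    rw [analyticAt_pi_iff]
    intro i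
    have hrw : (fun lam => v lam i)
        = fun lam => (g lam)⁻¹ * ((M lam).updateCol i (h lam)).det := by
      funext lam
      simp [hvdef, Matrix.cramer_apply]
    rw [hrw]
    exact ((hgan y hWy).inv hgy).mul (hcram y i hhy hWy)
  -- choose a good open set `s`
  have hEv : ∀ᶠ y in nhds lam0,
      AnalyticAt ℂ h y ∧ AnalyticAt ℂ W y ∧ AnalyticAt ℂ v y ∧ g y ≠ 0 := by
    have h4 : ∀ᶠ y in nhds lam0, g y ≠ 0 :=
      (hgan lam0 hW).continuousAt.eventually_ne hg0
    have h3 : ∀ᶠ y in nhds lam0, AnalyticAt ℂ v y :=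
      (hvan lam0 hh hW hg0).eventually_analyticAt
    exact hh.eventually_analyticAt.and ((hW.eventually_analyticAt).and (h3.and h4))
  obtain ⟨s, hsub, hsopen, hslam0⟩ := eventually_nhds_iff.mp hEv
  have hhs : AnalyticOnNhd ℂ h s := fun y hy => (hsub y hy).1
  have hWs : AnalyticOnNhd ℂ W s := fun y hy => (hsub y hy).2.1
  have hvs : AnalyticOnNhd ℂ v s := fun y hy => (hsub y hy).2.2.1
  have hgs : ∀ y ∈ s, g y ≠ 0 := fun y hy => (hsub y hy).2.2.2
  -- the key linear-combination identity on `s`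
  have hmain : ∀ lam ∈ s, h lam = ∑ i, v lam i • Fin.cons u (W lam) i := by
    intro lam hlam
    have h2 : M lam *ᵥ v lam = h lam := by
      rw [hvdef]
      simp only
      rw [Matrix.mulVec_smul, Matrix.mulVec_cramer, smul_smul,
        inv_mul_cancel₀ (hgs lam hlam), one_smul]
    funext i
    rw [← h2]
    rw [Finset.sum_apply]
    simp only [Matrix.mulVec, dotProduct, Pi.smul_apply, smul_eq_mul, hM,
      Matrix.transpose_apply, Matrix.of_apply]
    exact Finset.sum_congr rfl fun j _ => mul_comm _ _
  -- determinant factorization on `s`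
  have hdfac : ∀ lam ∈ s,
      ((Matrix.of (Fin.cons (h lam) (W lam)))ᵀ).det = v lam 0 * g lam := by
    intro lam hlam
    rw [Matrix.det_transpose]
    have hrow : Matrix.of (Fin.cons (h lam) (W lam))
        = (Matrix.of (Fin.cons u (W lam))).updateRow 0 (h lam) := by
      ext i j
      rcases Fin.eq_zero_or_eq_succ i with hi | ⟨c, hi⟩
      · subst hi; simp [Matrix.updateRow_self]
      · subst hi
        rw [Matrix.updateRow_ne (Fin.succ_ne_zero c)]
        simp
    rw [hrow, hmain lam hlam, my_det_updateRow_sum, Fin.sum_univ_succ]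
    have hz : ∀ c : Fin n,
        v lam c.succ * ((Matrix.of (Fin.cons u (W lam))).updateRow 0
          ((Fin.cons u (W lam) : Fin (n + 1) → Fin (n + 1) → ℂ) c.succ)).det = 0 := by
      intro c
      have : ((Matrix.of (Fin.cons u (W lam))).updateRow 0
          ((Fin.cons u (W lam) : Fin (n + 1) → Fin (n + 1) → ℂ) c.succ)).det = 0 := by
        apply Matrix.det_zero_of_row_eq (Fin.succ_ne_zero c).symm
        rw [Matrix.updateRow_self, Matrix.updateRow_ne (Fin.succ_ne_zero c)]
        show (Fin.cons u (W lam) : Fin (n + 1) → Fin (n + 1) → ℂ) c.succ = W lam c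
        rw [Fin.cons_succ]
      rw [this, mul_zero]
    rw [Finset.sum_eq_zero (fun c _ => hz c), add_zero]
    congr 1
    rw [show ((Fin.cons u (W lam) : Fin (n + 1) → Fin (n + 1) → ℂ) 0)
        = Matrix.of (Fin.cons u (W lam)) 0 from rfl, Matrix.updateRow_eq_self, hgdef]
    simp only [hM, Matrix.det_transpose]
  -- analyticity of the coefficient functions
  have hfA : ∀ i : Fin (n + 1), AnalyticOnNhd ℂ (fun lam => v lam i) s := fun i y hy =>
    ((ContinuousLinearMap.proj (R := ℂ)
      (φ := fun _ : Fin (n + 1) => ℂ) i).analyticAt _).comp (hvs y hy)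
  have hgOn : AnalyticOnNhd ℂ g s := fun y hy => hgan y (hWs y hy)
  -- all derivatives of `α = v · 0` up to order `m` vanish at `lam0`
  have hαg : (fun lam => ((Matrix.of (Fin.cons (h lam) (W lam)))ᵀ).det)
      =ᶠ[nhds lam0] fun lam => v lam 0 • g lam :=
    Filter.eventuallyEq_of_mem (hsopen.mem_nhds hslam0)
      (fun y hy => by rw [hdfac y hy]; simp [smul_eq_mul])
  have hαder : ∀ k, k ≤ m → iteratedDeriv k (fun lam => v lam 0) lam0 = 0 := by
    intro k
    induction k using Nat.strong_induction_on with
    | _ k ih =>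
      intro hk
      have h0 := hdet k hk
      rw [Filter.EventuallyEq.iteratedDeriv_eq k hαg] at h0
      rw [my_iteratedDeriv_smul hsopen (hfA 0) hgOn k hslam0] at h0
      rw [Finset.sum_range_succ] at h0
      have hz : ∀ j ∈ range k,
          ((k.choose j : ℂ) * iteratedDeriv j (fun lam => v lam 0) lam0) •
            iteratedDeriv (k - j) g lam0 = 0 := by
        intro j hj
        have hjk := Finset.mem_range.mp hj
        rw [ih j hjk (le_trans (le_of_lt hjk) hk), mul_zero, zero_smul]
      rw [Finset.sum_eq_zero hz, zero_add, Nat.choose_self, Nat.sub_self,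
        iteratedDeriv_zero, Nat.cast_one, one_mul, smul_eq_mul] at h0
      exact (mul_eq_zero.mp h0).resolve_right hg0
  -- the family of vector functions
  set vec : Fin (n + 1) → ℂ → (Fin (n + 1) → ℂ) := fun i lam => (Fin.cons u (W lam) : Fin (n + 1) → Fin (n + 1) → ℂ) i
    with hvecdef
  have hvecA : ∀ i, AnalyticOnNhd ℂ (vec i) s := by
    intro i
    refine Fin.cases ?_ (fun c => ?_) i
    · intro y hy
      have : vec 0 = fun _ => u := by funext lam; simp [hvecdef]
      rw [this]; exact analyticAt_const
    · intro y hy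
      have : vec c.succ = fun lam => W lam c := by funext lam; simp [hvecdef]
      rw [this]
      exact ((ContinuousLinearMap.proj (R := ℂ)
        (φ := fun _ : Fin n => Fin (n + 1) → ℂ) c).analyticAt _).comp (hWs y hy)
  have hhder : ∀ k : ℕ, iteratedDeriv k h lam0
      = ∑ i, ∑ j ∈ Finset.range (k + 1),
          ((k.choose j : ℂ) * iteratedDeriv j (fun lam => v lam i) lam0) •
            iteratedDeriv (k - j) (vec i) lam0 := by
    intro k
    have hE : h =ᶠ[nhds lam0] fun y => ∑ i, v y i • vec i y :=
      Filter.eventuallyEq_of_mem (hsopen.mem_nhds hslam0) (fun y hy => hmain y hy)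
    rw [Filter.EventuallyEq.iteratedDeriv_eq k hE,
      my_iteratedDeriv_sum_smul hsopen hfA hvecA k lam0 hslam0]
  refine ⟨fun j c => iteratedDeriv j (fun lam => v lam c.succ) lam0, ?_, ?_⟩
  · intro hB0
    have hb : ∀ c : Fin n, v lam0 c.succ = 0 := by
      intro c
      have := congrFun hB0 c
      simpa using this
    have hα0 : v lam0 0 = 0 := by
      have := hαder 0 (Nat.zero_le m)
      simpa using this
    apply hh0
    rw [hmain lam0 hslam0, Fin.sum_univ_succ]
    simp [hα0, hb]
  · intro k hk
    rw [hhder k, Fin.sum_univ_succ]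
    have hz : ∑ j ∈ Finset.range (k + 1),
        ((k.choose j : ℂ) * iteratedDeriv j (fun lam => v lam (0 : Fin (n + 1))) lam0) •
          iteratedDeriv (k - j) (vec 0) lam0 = 0 := by
      apply Finset.sum_eq_zero
      intro j hj
      rw [hαder j (le_trans (Nat.lt_succ_iff.mp (Finset.mem_range.mp hj)) hk),
        mul_zero, zero_smul]
    rw [hz, zero_add, Finset.sum_comm, Finset.smul_sum]
    refine Finset.sum_congr rfl fun j hj => ?_
    rw [Finset.smul_sum, Finset.smul_sum]
    refine Finset.sum_congr rfl fun c _ => ?_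
    have hWc : iteratedDeriv (k - j) W lam0 c
        = iteratedDeriv (k - j) (fun lam => W lam c) lam0 :=
      my_iteratedDeriv_comp_apply hsopen hWs (k - j) c lam0 hslam0
    have hvec : vec c.succ = fun lam => W lam c := by funext lam; simp [hvecdef]
    rw [hWc, hvec, smul_smul, smul_smul]
    congr 1
    have hjk : j ≤ k := Nat.lt_succ_iff.mp (Finset.mem_range.mp hj)
    have hfacC : (k.choose j : ℂ) * (j.factorial : ℂ) * ((k - j).factorial : ℂ)
        = (k.factorial : ℂ) := by
      exact_mod_cast congrArg (fun t : ℕ => (t : ℂ))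
        (Nat.choose_mul_factorial_mul_factorial hjk)
    have h1 : (k.factorial : ℂ) ≠ 0 := Nat.cast_ne_zero.mpr k.factorial_ne_zero
    have h2 : (j.factorial : ℂ) ≠ 0 := Nat.cast_ne_zero.mpr j.factorial_ne_zero
    have h3 : ((k - j).factorial : ℂ) ≠ 0 := Nat.cast_ne_zero.mpr (k - j).factorial_ne_zero
    field_simp
    ring_nf
    ring_nf at hfacC
    linear_combination iteratedDeriv j (fun lam => v lam c.succ) lam0 * hfacC
end
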